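/- Let $a_n$ be a sequence of nondecreasing right-continuous functions from $[0,\infty)$ to $[0,\infty)$ with $a_n(0)=0$, converging uniformly on compact sets to a continuous strictly increasing function $a$ with $a(0)=0$ and $\lim_{s\to\infty} a(s)=\infty$. Then the right-continuous inverses $a_n^{-1}(t) := \inf\{s \ge 0 : a_n(s) > t\}$ converge pointwise to $a^{-1}$ at every $t > 0$. -/
import Mathlib


open Filter Set

/-- Convergence of right-continuous inverses at points `t > 0`, when nondecreasing
right-continuous functions `aₙ` converge locally uniformly to a continuous strictly
increasing unbounded function `a` with `a 0 = 0`. The right-continuous inverse of `w`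
is `w⁻¹(t) = inf {s ≥ 0 : w s > t}`. -/
theorem stmt1 (a : ℝ → ℝ) (an : ℕ → ℝ → ℝ)
    (han_mono : ∀ n, MonotoneOn (an n) (Ici 0))
    (han_rc : ∀ n, ∀ s ∈ Ici (0:ℝ), ContinuousWithinAt (an n) (Ici s) s)
    (han_nonneg : ∀ n s, 0 ≤ s → 0 ≤ an n s)
    (han0 : ∀ n, an n 0 = 0)
    (ha_cont : ContinuousOn a (Ici 0))
    (ha_mono : StrictMonoOn a (Ici 0))
    (ha0 : a 0 = 0)
    (ha_inf : Tendsto a atTop atTop)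
    (hunif : ∀ S > (0:ℝ), TendstoUniformlyOn an a atTop (Icc 0 S)) :
    ∀ t > (0:ℝ), Tendsto (fun n => sInf {s : ℝ | 0 ≤ s ∧ t < an n s}) atTop
      (nhds (sInf {s : ℝ | 0 ≤ s ∧ t < a s})) := by
  intro t ht
  obtain ⟨M, hMt, hM0⟩ :=
    ((ha_inf.eventually_ge_atTop t).and (eventually_ge_atTop (0:ℝ))).exists
  obtain ⟨s₀, hs₀mem, hs₀⟩ := intermediate_value_Icc hM0
    (ha_cont.mono Icc_subset_Ici_self) ⟨by rw [ha0]; exact ht.le, hMt⟩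
  have hs₀0 : 0 < s₀ := by
    rcases lt_or_eq_of_le hs₀mem.1 with h | h
    · exact h
    · exfalso; rw [← h, ha0] at hs₀; exact ht.ne hs₀
  have hs₀Ici : s₀ ∈ Ici (0:ℝ) := hs₀0.le
  have hT : sInf {s : ℝ | 0 ≤ s ∧ t < a s} = s₀ := by
    apply le_antisymm
    · apply le_of_forall_pos_le_add
      intro η hη
      refine csInf_le ⟨0, fun s hs => hs.1⟩ ⟨by linarith, ?_⟩
      rw [← hs₀]
      exact ha_mono hs₀Ici (by simp; linarith) (by linarith)
    · refine le_csInf ⟨s₀ + 1, ⟨by linarith, ?_⟩⟩ ?_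
      · rw [← hs₀]; exact ha_mono hs₀Ici (by simp; linarith) (by linarith)
      · intro s hs
        by_contra h
        push_neg at h
        have : a s < a s₀ := ha_mono (mem_Ici.2 hs.1) hs₀Ici h
        rw [hs₀] at this
        exact absurd hs.2 (not_lt.2 this.le)
  rw [hT, Metric.tendsto_atTop]
  intro ε hε
  set ε' := min (ε/2) (s₀/2) with hε'def
  have hε'1 : ε' ≤ ε/2 := min_le_left _ _
  have hε'2 : ε' ≤ s₀/2 := min_le_right _ _
  have hε'pos : 0 < ε' := lt_min (by linarith) (by linarith)
  have hsub : 0 < s₀ - ε' := by linarith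
  have hδ1 : 0 < a (s₀ + ε') - t := by
    have : a s₀ < a (s₀ + ε') :=
      ha_mono hs₀Ici (show s₀ + ε' ∈ Ici (0:ℝ) from by simp; linarith) (by linarith)
    rw [hs₀] at this; linarith
  have hδ2 : 0 < t - a (s₀ - ε') := by
    have : a (s₀ - ε') < a s₀ :=
      ha_mono (show s₀ - ε' ∈ Ici (0:ℝ) from hsub.le) hs₀Ici (by linarith)
    rw [hs₀] at this; linarith
  set δ := min (a (s₀ + ε') - t) (t - a (s₀ - ε')) / 2 with hδdef
  have hδpos : 0 < δ := by
    have := lt_min hδ1 hδ2; positivity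
  have hδlt1 : δ < a (s₀ + ε') - t := by
    have h1 := min_le_left (a (s₀ + ε') - t) (t - a (s₀ - ε'))
    have h2 := lt_min hδ1 hδ2
    rw [hδdef]; linarith
  have hδlt2 : δ < t - a (s₀ - ε') := by
    have h1 := min_le_right (a (s₀ + ε') - t) (t - a (s₀ - ε'))
    have h2 := lt_min hδ1 hδ2
    rw [hδdef]; linarith
  have hu := (Metric.tendstoUniformlyOn_iff.1 (hunif (s₀ + ε') (by linarith))) δ hδpos
  rw [eventually_atTop] at hu
  obtain ⟨N, hN⟩ := hu
  refine ⟨N, fun n hn => ?_⟩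
  have hb : ∀ x ∈ Icc 0 (s₀ + ε'), |a x - an n x| < δ := by
    intro x hx
    have := hN n hn x hx
    rwa [Real.dist_eq] at this
  have hmem : (s₀ + ε') ∈ {s : ℝ | 0 ≤ s ∧ t < an n s} := by
    refine ⟨by linarith, ?_⟩
    have h := abs_lt.1 (hb (s₀ + ε') ⟨by linarith, le_refl _⟩)
    linarith [h.1]
  have hle : sInf {s : ℝ | 0 ≤ s ∧ t < an n s} ≤ s₀ + ε' :=
    csInf_le ⟨0, fun s hs => hs.1⟩ hmem
  have hge : s₀ - ε' ≤ sInf {s : ℝ | 0 ≤ s ∧ t < an n s} := by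
    refine le_csInf ⟨_, hmem⟩ ?_
    intro s hs
    by_contra h
    push_neg at h
    have hsIcc : s ∈ Icc (0:ℝ) (s₀ + ε') := ⟨hs.1, by linarith⟩
    have h1 := abs_lt.1 (hb s hsIcc)
    have h2 : a s ≤ a (s₀ - ε') :=
      ha_mono.monotoneOn (mem_Ici.2 hs.1) (mem_Ici.2 hsub.le) h.le
    have : an n s < t := by linarith [h1.2]
    exact absurd hs.2 (not_lt.2 this.le)
  rw [Real.dist_eq, abs_lt]
  constructor <;> linarith
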